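/- Let f ∈ ℂ[t,Δ_1,…,Δ_m] and let (t_0, Δ̄_0) ∈ ℂ^{m+1} satisfy f(t_0,Δ̄_0) = 0 and E_i(t_0,Δ̄_0) = 0 for every i = 1,…,m. Then R(f)(t_0) = 0, where R(f) ∈ ℂ[t] is the normalized remainder of f. -/

import Mathlib

open MvPolynomial
open scoped NNRat

noncomputable section
namespace Radical

variable {m : ℕ} {R : Type*} [CommRing R] [Algebra ℂ R]

/-- The algebra endomorphism of `ℂ[t,Δ₁,…,Δ_m]` (variable `0` is `t`, variable
`i.succ` is `Δ_{i+1}`) substituting `X v ↦ c · X v` and fixing the other variables. -/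
def conjVar (v : Fin (m+1)) (c : ℂ) :
    MvPolynomial (Fin (m+1)) R →ₐ[R] MvPolynomial (Fin (m+1)) R :=
  aeval fun u => if u = v then C (algebraMap ℂ R c) * X v else X u

/-- The remainder of `F` upon division by `X v ^ e - gk` with respect to the variable `v`
(assuming `gk` does not involve `v`): each occurrence of `(X v)^d` is replaced by
`gk^(d / e) * (X v)^(d % e)`. -/
def remE (v : Fin (m+1)) (e : ℕ) (gk F : MvPolynomial (Fin (m+1)) R) :
    MvPolynomial (Fin (m+1)) R :=
  ∑ μ ∈ F.support, (fun μ c => (C c * gk ^ (μ v / e)) * monomial (μ.update v (μ v % e)) 1) μ (coeff μ F)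

/-- `γ_k = exp(2πi/e_k)`. -/
def root (ek : ℕ) : ℂ := Complex.exp (2 * Real.pi * Complex.I / ek)

/-- `F_k = ∏_{j=1}^{e_k} f(t,Δ₁,…,Δ_{k-1},γ_k^j·Δ_k)` (here `k : Fin m` is the 0-based
index, the variable of `Δ_{k+1}` being `k.succ`). -/
def conjProd (e : Fin m → ℕ) (k : Fin m) (f : MvPolynomial (Fin (m+1)) R) :
    MvPolynomial (Fin (m+1)) R :=
  ∏ j ∈ Finset.range (e k), conjVar k.succ (root (e k) ^ (j+1)) f

/-- One step of the normalized-remainder recursion: from `f_{k+1}` to `f_k`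
(0-based `k : Fin m`): the remainder of `F_{k+1}` upon division by `E_{k+1}` w.r.t. `Δ_{k+1}`. -/
def step (e : Fin m → ℕ) (g : Fin m → MvPolynomial (Fin (m+1)) R) (k : Fin m)
    (f : MvPolynomial (Fin (m+1)) R) : MvPolynomial (Fin (m+1)) R :=
  remE k.succ (e k) (g k) (conjProd e k f)

/-- `seqAux e g f j = f_{m-j}` in the normalized-remainder recursion starting at `f_m = f`. -/
def seqAux (e : Fin m → ℕ) (g : Fin m → MvPolynomial (Fin (m+1)) R)
    (f : MvPolynomial (Fin (m+1)) R) : ℕ → MvPolynomial (Fin (m+1)) R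
  | 0 => f
  | j+1 => if h : j < m then step e g ⟨m - 1 - j, by omega⟩ (seqAux e g f j) else seqAux e g f j

/-- The normalized remainder `R(f) = f₀`. -/
def Rnorm (e : Fin m → ℕ) (g : Fin m → MvPolynomial (Fin (m+1)) R)
    (f : MvPolynomial (Fin (m+1)) R) : MvPolynomial (Fin (m+1)) R :=
  seqAux e g f m

/-- `E_{i+1} = Δ_{i+1}^{e_{i+1}} - g_{i+1}` (0-based `i : Fin m`). -/
def Epoly (e : Fin m → ℕ) (g : Fin m → MvPolynomial (Fin (m+1)) R) (i : Fin m) :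
    MvPolynomial (Fin (m+1)) R :=
  X i.succ ^ e i - g i

/-- `p` is in normal form w.r.t. `{E₁,…,E_m}` (i.e. `N(p) = p`): no `Δ_i^{e_i}` can be
substituted, that is `deg_{Δ_i} p < e_i` for all `i`. -/
def IsNormalForm (e : Fin m → ℕ) (p : MvPolynomial (Fin (m+1)) R) : Prop :=
  ∀ i : Fin m, degreeOf i.succ p < e i

/-- `f` is guilty : `deg(f)·e₁⋯e_m > deg_t(R(f))`. -/
def Guilty (e : Fin m → ℕ) (g : Fin m → MvPolynomial (Fin (m+1)) ℂ)
    (w : Fin (m+1) → ℚ≥0) (f : MvPolynomial (Fin (m+1)) ℂ) : Prop :=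
  ((degreeOf 0 (Rnorm e g f) : ℚ≥0)) < weightedTotalDegree w f * ∏ i, (e i : ℚ≥0)

/-- The set of exponents of the monomials in the homogeneous component of highest
weighted degree of `f`. -/
def leadSupport (w : Fin (m+1) → ℚ≥0) (f : MvPolynomial (Fin (m+1)) ℂ) :
    Finset (Fin (m+1) →₀ ℕ) :=
  f.support.filter fun μ => Finsupp.weight w μ = weightedTotalDegree w f

/-- Auxiliary fuelled version of `Suspicious` (fuel `m` always suffices, since `g i` only
involves the variables `t, Δ₁, …, Δ_i`). -/
def SuspAux (g : Fin m → MvPolynomial (Fin (m+1)) ℂ) (w : Fin (m+1) → ℚ≥0) :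
    ℕ → MvPolynomial (Fin (m+1)) ℂ → Prop
  | 0, f => 1 < (leadSupport w f).card
  | b+1, f => 1 < (leadSupport w f).card ∨
      ∃ i : Fin m, (∃ μ ∈ leadSupport w f, μ i.succ ≠ 0) ∧ SuspAux g w b (g i)

/-- `f` is suspicious: either its homogeneous component of highest weighted degree has at
least two terms, or some `Δ_i` appears in its unique leading term and `g_i` is suspicious. -/
def Suspicious (g : Fin m → MvPolynomial (Fin (m+1)) ℂ) (w : Fin (m+1) → ℚ≥0)
    (f : MvPolynomial (Fin (m+1)) ℂ) : Prop :=
  SuspAux g w m f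

/-- A subset of `ℂⁿ` is Zariski closed if it is the common zero locus of a family of
polynomials. -/
def IsZariskiClosed {n : ℕ} (S : Set (Fin n → ℂ)) : Prop :=
  ∃ T : Set (MvPolynomial (Fin n) ℂ), S = {x | ∀ p ∈ T, eval x p = 0}

/-- The image set `X(P)` of the radical parametrization `P = (p₁/q₁,…,p_n/q_n)`. -/
def ImageSet {n : ℕ} (e : Fin m → ℕ) (g : Fin m → MvPolynomial (Fin (m+1)) ℂ)
    (p q : Fin n → MvPolynomial (Fin (m+1)) ℂ) : Set (Fin n → ℂ) :=
  {x | ∃ a : Fin (m+1) → ℂ, (∀ i, eval a (Epoly e g i) = 0) ∧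
        (∀ i, eval a (q i) ≠ 0) ∧ ∀ i, eval a (p i) / eval a (q i) = x i}

end Radical

/-! Passing from `f_k` to `f_{k-1}` preserves vanishing at a point of the variety `E_1 = ⋯ = E_m = 0`:
the product `F_k` contains `f_k` itself as its factor `j = e_k` (because `γ_k ^ e_k = 1`), and
reducing modulo `E_k` does not change values at points where `E_k` vanishes. -/

namespace Radical

variable {m : ℕ} {R : Type*} [CommRing R]

theorem root_pow_self {n : ℕ} (hn : n ≠ 0) : root n ^ n = 1 :=
  (Complex.isPrimitiveRoot_exp n hn).pow_eq_one

theorem eval_remE {v : Fin (m+1)} {e : ℕ} {gk : MvPolynomial (Fin (m+1)) R}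
    (F : MvPolynomial (Fin (m+1)) R) {a : Fin (m+1) → R} (ha : a v ^ e = eval a gk) :
    eval a (remE v e gk F) = eval a F := by
  conv_rhs => rw [F.as_sum]
  rw [remE, map_sum, map_sum]
  refine Finset.sum_congr rfl fun μ _ => ?_
  have hμ : μ = μ.update v (μ v % e) + Finsupp.single v (e * (μ v / e)) := by
    ext u
    rcases eq_or_ne u v with rfl | hu
    · simp [Nat.mod_add_div]
    · simp [Function.update_of_ne hu, Ne.symm hu]
  have hsplit : (monomial μ (coeff μ F) : MvPolynomial (Fin (m+1)) R)
      = C (coeff μ F) * monomial (μ.update v (μ v % e)) 1 * X v ^ (e * (μ v / e)) := by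
    rw [X_pow_eq_monomial, C_mul_monomial, monomial_mul, mul_one, mul_one, ← hμ]
  rw [hsplit]
  simp only [map_mul, map_pow, eval_X, eval_C, pow_mul, ha]
  ring

theorem eval_Epoly_eq_zero_iff (e : Fin m → ℕ) (g : Fin m → MvPolynomial (Fin (m+1)) R)
    (i : Fin m) (a : Fin (m+1) → R) :
    eval a (Epoly e g i) = 0 ↔ a i.succ ^ e i = eval a (g i) := by
  rw [Epoly, map_sub, map_pow, eval_X, sub_eq_zero]

section

variable [Algebra ℂ R]

theorem conjVar_one (v : Fin (m+1)) (f : MvPolynomial (Fin (m+1)) R) : conjVar v 1 f = f := by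
  have hX : (fun u => if u = v then C (algebraMap ℂ R 1) * X v else X u)
      = (X : Fin (m+1) → MvPolynomial (Fin (m+1)) R) := by
    funext u
    split_ifs with hu <;> simp [hu]
  rw [conjVar, hX, aeval_X_left_apply]

theorem dvd_conjProd (e : Fin m → ℕ) (k : Fin m) (hk : e k ≠ 0) (f : MvPolynomial (Fin (m+1)) R) :
    f ∣ conjProd e k f := by
  have hlast : e k - 1 ∈ Finset.range (e k) := Finset.mem_range.2 (by omega)
  have hfactor : conjVar k.succ (root (e k) ^ (e k - 1 + 1)) f = f := by
    rw [Nat.sub_add_cancel (Nat.one_le_iff_ne_zero.2 hk), root_pow_self hk, conjVar_one]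
  calc f = conjVar k.succ (root (e k) ^ (e k - 1 + 1)) f := hfactor.symm
    _ ∣ conjProd e k f := Finset.dvd_prod_of_mem _ hlast

theorem eval_step_eq_zero {e : Fin m → ℕ} {g : Fin m → MvPolynomial (Fin (m+1)) R} {k : Fin m}
    (hk : e k ≠ 0) {f : MvPolynomial (Fin (m+1)) R} {a : Fin (m+1) → R}
    (hfa : eval a f = 0) (hEa : eval a (Epoly e g k) = 0) :
    eval a (step e g k f) = 0 := by
  rw [step, eval_remE _ ((eval_Epoly_eq_zero_iff e g k a).1 hEa)]
  obtain ⟨q, hq⟩ := dvd_conjProd e k hk f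
  rw [hq, map_mul, hfa, zero_mul]

theorem eval_seqAux_eq_zero {e : Fin m → ℕ} (he : ∀ i, e i ≠ 0)
    {g : Fin m → MvPolynomial (Fin (m+1)) R} {f : MvPolynomial (Fin (m+1)) R}
    {a : Fin (m+1) → R} (hfa : eval a f = 0) (hEa : ∀ i, eval a (Epoly e g i) = 0) :
    ∀ j, eval a (seqAux e g f j) = 0
  | 0 => hfa
  | j + 1 => by
    rw [seqAux]
    split
    · exact eval_step_eq_zero (he _) (eval_seqAux_eq_zero he hfa hEa j) (hEa _)
    · exact eval_seqAux_eq_zero he hfa hEa j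

end

theorem stmt8_general
    (m : ℕ) (e : Fin m → ℕ) (he : ∀ i, 2 ≤ e i)
    (g : Fin m → MvPolynomial (Fin (m+1)) ℂ)
    (f : MvPolynomial (Fin (m+1)) ℂ) (a : Fin (m+1) → ℂ)
    (hfa : eval a f = 0) (hEa : ∀ i, eval a (Epoly e g i) = 0) :
    eval a (Rnorm e g f) = 0 :=
  eval_seqAux_eq_zero (fun i => by have := he i; omega) hfa hEa m

/-- If `f ∈ ℂ[t,Δ₁,…,Δ_m]` and `(t₀,Δ̄₀) ∈ ℂ^{m+1}` satisfy `f(t₀,Δ̄₀) = 0` and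
`E_i(t₀,Δ̄₀) = 0` for every `i`, then `R(f)(t₀) = 0`. -/
theorem stmt8
    (m : ℕ) (hm : 1 ≤ m) (e : Fin m → ℕ) (he : ∀ i, 2 ≤ e i)
    (g : Fin m → MvPolynomial (Fin (m+1)) ℂ)
    (hgv : ∀ i : Fin m, ∀ v ∈ (g i).vars, (v : ℕ) ≤ (i : ℕ))
    (hgd : ∀ i j : Fin m, (j : ℕ) < (i : ℕ) → MvPolynomial.degreeOf j.succ (g i) < e j)
    (f : MvPolynomial (Fin (m+1)) ℂ) (a : Fin (m+1) → ℂ)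
    (hfa : eval a f = 0) (hEa : ∀ i, eval a (Epoly e g i) = 0) :
    eval a (Rnorm e g f) = 0 :=
  stmt8_general m e he g f a hfa hEa

end Radical
end
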